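/- arXiv:2005.06855 — 6 statements merged into one kernel-verified Lean document; each statement's English description precedes it below -/
import Mathlib

section
/- Let S be a profinite space written as a cofiltered limit S = lim_{i∈I} S_i of finite discrete spaces, and let T be an arbitrary discrete topological space. Then the natural map colim_i C(S_i, T) → C(S, T) from the filtered colimit of sets of continuous maps is a bijection. -/
/-!
The limit `S` is compact: it is the closed set of compatible families in the product of the
finite stages. Given `f : S → T`, the closed sets `{(x, y) | π_i x = π_i y, f x ≠ f y}` form a
directed family with empty intersection, so by compactness one of them is empty and `f` is
constant on the fibres of some `π_i`. Because the stages are finite the system is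
Mittag-Leffler, and the image of `π_i` is its eventual range, i.e. the image of a single
transition map `S_k → S_i`. This lets `f` descend to `S_k`, and it shows that two maps which
agree on `S` agree after pulling back to such an `S_k`.
-/

set_option linter.unusedVariables false

open CategoryTheory Limits

open Set Topology

namespace CategoryTheory.Functor

variable {J : Type*} [Category J] [IsCofilteredOrEmpty J] (G : J ⥤ Type*)
  [∀ j, Finite (G.obj j)]

theorem isMittagLeffler_of_finite : G.IsMittagLeffler :=
  G.isMittagLeffler_of_exists_finite_range fun j => ⟨j, 𝟙 j, toFinite _⟩

theorem range_eval_sections_eq_eventualRange (j : J) :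
    range (fun s : G.sections => s.val j) = G.eventualRange j := by
  refine subset_antisymm ?_ fun x hx => ?_
  · rintro _ ⟨s, rfl⟩
    exact G.mem_eventualRange_iff.2 fun i f => ⟨s.val i, s.prop f⟩
  have hML := G.isMittagLeffler_of_finite
  -- On eventual ranges the transition maps are surjective, so by König's lemma every point
  -- lifts to a section as soon as all stages are nonempty.
  have : ∀ k, Nonempty (G.toEventualRanges.obj k) := fun k => by
    obtain ⟨m, f, g, -⟩ := IsCofilteredOrEmpty.cone_objs j k
    obtain ⟨y, hy, -⟩ := (hML.eq_image_eventualRange G f).le hx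
    exact ⟨⟨G.map g y, G.eventualRange_mapsTo g hy⟩⟩
  obtain ⟨s, hs⟩ := G.toEventualRanges.eval_section_surjective_of_surjective
    (G.surjective_toEventualRanges hML) j ⟨x, hx⟩
  exact ⟨G.toEventualRangesSectionsEquiv s, congrArg Subtype.val hs⟩

end CategoryTheory.Functor

namespace TopCat

variable {J : Type*} [Category J] {F : J ⥤ TopCat} {c : Cone F}

theorem range_π_eq_range_eval_sections (hc : IsLimit c) (j : J) :
    range (c.π.app j) = range (fun s : (F ⋙ forget TopCat).sections => s.val j) := by
  rw [← (Types.isLimitEquivSections (isLimitOfPreserves (forget TopCat) hc)).surjective.range_comp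
    (fun s => s.val j)]
  rfl

theorem compactSpace_of_isLimit [∀ j, CompactSpace (F.obj j)] [∀ j, T2Space (F.obj j)]
    (hc : IsLimit c) : CompactSpace c.pt := by
  let Φ : c.pt → ∀ j, F.obj j := fun x j => c.π.app j x
  have hΦ : IsInducing Φ := by
    refine ⟨?_⟩
    rw [induced_of_isLimit c hc, Pi.topologicalSpace, induced_iInf]
    simp only [induced_compose]
    rfl
  have hrange : range Φ = {u | ∀ ⦃i j⦄ (f : i ⟶ j), F.map f (u i) = u j} :=
    ((Types.isLimitEquivSections (isLimitOfPreserves (forget TopCat) hc)).surjective.range_comp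
      Subtype.val).trans Subtype.range_coe
  have hclosed :
      IsClosed {u : ∀ j, F.obj j | ∀ ⦃i j⦄ (f : i ⟶ j), F.map f (u i) = u j} := by
    simp only [ofPred_forall]
    exact isClosed_iInter fun i => isClosed_iInter fun j => isClosed_iInter fun f =>
      isClosed_eq ((F.map f).hom.continuous.comp (continuous_apply i)) (continuous_apply j)
  exact ⟨hΦ.isCompact_iff.2 (by rw [image_univ, hrange]; exact hclosed.isCompact)⟩

theorem exists_map_range_eq_range_π [IsCofilteredOrEmpty J] [∀ j, Finite (F.obj j)]
    (hc : IsLimit c) (j : J) : ∃ (i : J) (f : i ⟶ j), range (F.map f) = range (c.π.app j) := by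
  obtain ⟨i, f, hf⟩ := (F ⋙ forget TopCat).isMittagLeffler_iff_eventualRange.1
    (F ⋙ forget TopCat).isMittagLeffler_of_finite j
  refine ⟨i, f, ?_⟩
  rw [range_π_eq_range_eval_sections hc, Functor.range_eval_sections_eq_eventualRange, hf]
  rfl

theorem exists_π_eq_imp_apply_eq [IsCofiltered J] [CompactSpace c.pt] [∀ j, T2Space (F.obj j)]
    (hc : IsLimit c) {T : Type*} [TopologicalSpace T] [DiscreteTopology T] (f : C(c.pt, T)) :
    ∃ j, ∀ x y, c.π.app j x = c.π.app j y → f x = f y := by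
  let K : J → Set (c.pt × c.pt) := fun j =>
    {p | c.π.app j p.1 = c.π.app j p.2} ∩ {p | f p.1 ≠ f p.2}
  have hK_closed : ∀ j, IsClosed (K j) := fun j =>
    (isClosed_eq (by fun_prop) (by fun_prop)).inter
      ((isOpen_discrete {q : T × T | q.1 = q.2}).preimage
        ((f.continuous.comp continuous_fst).prodMk
          (f.continuous.comp continuous_snd))).isClosed_compl
  have hK_anti : ∀ {i j} (u : i ⟶ j), K i ⊆ K j := fun u p hp =>
    ⟨by simp only [mem_ofPred_eq, ← c.w_apply u]; exact congrArg _ hp.1, hp.2⟩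
  have hK_directed : Directed (· ⊇ ·) K := fun i j =>
    ⟨IsCofiltered.min i j, hK_anti (IsCofiltered.minToLeft i j),
      hK_anti (IsCofiltered.minToRight i j)⟩
  have : Nonempty J := IsCofiltered.nonempty
  have hK_empty : univ ∩ ⋂ j, K j = ∅ := by
    refine eq_empty_of_forall_notMem ?_
    rintro p ⟨-, hp⟩
    have hp' := mem_iInter.1 hp
    have hp_diag : p.1 = p.2 := Concrete.isLimit_ext F hc _ _ fun j => (hp' j).1
    exact (hp' (Classical.arbitrary J)).2 (congrArg f hp_diag)
  obtain ⟨j, hj⟩ := isCompact_univ.elim_directed_family_closed K hK_closed hK_empty hK_directed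
  refine ⟨j, fun x y hxy => by_contra fun hne => ?_⟩
  exact eq_empty_iff_forall_notMem.1 hj (x, y) ⟨mem_univ _, hxy, hne⟩

end TopCat

/-- Let `S` be a profinite space written as a cofiltered limit
`S = lim_{i ∈ I} S_i` of finite discrete spaces, and let `T` be an arbitrary discrete
topological space. Then the natural map `colim_i C(S_i, T) → C(S, T)` is a bijection:
every continuous map `S → T` factors through some projection `S → S_i` (surjectivity), and
two maps `S_i → T`, `S_j → T` inducing the same map on `S` are equalized after passing to
some common refinement `S_k` (injectivity of the map from the filtered colimit). -/
theorem colimit_continuousMaps_to_discrete_bijective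
    {I : Type*} [Category I] [IsCofiltered I]
    (F : I ⥤ TopCat) (hfin : ∀ i, Finite (F.obj i)) (hdisc : ∀ i, DiscreteTopology (F.obj i))
    (T : Type*) [TopologicalSpace T] [DiscreteTopology T]
    (c : Cone F) (hc : IsLimit c) :
    (∀ f : C(c.pt, T), ∃ (i : I) (g : C(F.obj i, T)), ⇑f = ⇑g ∘ ⇑(c.π.app i)) ∧
    (∀ (i j : I) (g : C(F.obj i, T)) (h : C(F.obj j, T)),
        ⇑g ∘ ⇑(c.π.app i) = ⇑h ∘ ⇑(c.π.app j) →
        ∃ (k : I) (u : k ⟶ i) (v : k ⟶ j), ⇑g ∘ ⇑(F.map u) = ⇑h ∘ ⇑(F.map v)) := by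
  have := TopCat.compactSpace_of_isLimit hc
  refine ⟨fun f => ?_, fun i j g h hgh => ?_⟩
  · obtain ⟨i, hi⟩ := TopCat.exists_π_eq_imp_apply_eq hc f
    obtain ⟨k, w, hw⟩ := TopCat.exists_map_range_eq_range_π hc i
    choose lift hlift using fun y => hw ▸ mem_range_self (f := F.map w) y
    refine ⟨k, ⟨f ∘ lift, continuous_of_discreteTopology⟩, funext fun x => hi _ _ ?_⟩
    rw [hlift, c.w_apply]
  · let m := IsCofiltered.min i j
    obtain ⟨k, w, hw⟩ := TopCat.exists_map_range_eq_range_π hc m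
    refine ⟨k, w ≫ IsCofiltered.minToLeft i j, w ≫ IsCofiltered.minToRight i j,
      funext fun y => ?_⟩
    obtain ⟨x, hx⟩ : F.map w y ∈ range (c.π.app m) := hw ▸ mem_range_self y
    simp only [Function.comp_apply, Functor.map_comp, ConcreteCategory.comp_apply, ← hx,
      c.w_apply]
    exact congrFun hgh x
end

section
/- Let T be a profinite space, Λ a discrete ring and M a discrete Λ-module. Then the natural map C(T, Λ) ⊗_Λ M → C(T, M), sending f ⊗ x to the function t ↦ f(t)·x, is an isomorphism of C(T, Λ)-modules (where C denotes continuous maps, C(T,Λ) is a ring under pointwise operations, and C(T,M) a module under pointwise scalar multiplication). -/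
/-! Since `T` is compact and `Λ`, `M` are discrete, a continuous map `e` out of `T` takes finitely
many values, on clopen fibres. A continuous `g : T → M` is therefore the image of
`∑ m, 1_{g⁻¹ m} ⊗ m`. Conversely a tensor `∑ i, f i ⊗ m i` can be regrouped along the fibres of
`e = (f i)_i` as `∑ v, 1_{e⁻¹ v} ⊗ n v` with `n v = ∑ i, v i • m i`; its image is `t ↦ n (e t)`,
which vanishes only if every `n v` with `v` in the range of `e` does, i.e. only if the tensor is
zero. -/

set_option linter.unusedVariables false

open scoped TensorProduct

section
variable {T : Type*} [TopologicalSpace T] [CompactSpace T] [T2Space T]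
  [TotallyDisconnectedSpace T]
variable {Λ : Type*} [CommRing Λ] [TopologicalSpace Λ] [DiscreteTopology Λ]
variable {M : Type*} [AddCommGroup M] [Module Λ M] [TopologicalSpace M] [DiscreteTopology M]

instance : ContinuousAdd M := ⟨continuous_of_discreteTopology⟩
instance : ContinuousConstSMul Λ M := ⟨fun _ => continuous_of_discreteTopology⟩
instance : ContinuousSMul Λ M := ⟨continuous_of_discreteTopology⟩
instance : IsTopologicalRing Λ where
  continuous_add := continuous_of_discreteTopology
  continuous_mul := continuous_of_discreteTopology
  continuous_neg := continuous_of_discreteTopology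

/-- The natural `Λ`-bilinear map `C(T, Λ) × M → C(T, M)`, `(f, x) ↦ (t ↦ f t • x)`. -/
noncomputable def contMapSMulBilin : C(T, Λ) →ₗ[Λ] M →ₗ[Λ] C(T, M) :=
  LinearMap.mk₂ Λ
    (fun f x => ContinuousMap.mk (fun t => f t • x)
      ((continuous_of_discreteTopology (f := fun a : Λ => a • x)).comp f.continuous))
    (fun f g x => ContinuousMap.ext fun t => add_smul (f t) (g t) x)
    (fun c f x => ContinuousMap.ext fun t => mul_smul c (f t) x)
    (fun f x y => ContinuousMap.ext fun t => smul_add (f t) x y)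
    (fun c f x => ContinuousMap.ext fun t => smul_comm (f t) c x)

/-- The natural map `C(T, Λ) ⊗[Λ] M → C(T, M)`. -/
noncomputable def contMapTensorEquivMap : C(T, Λ) ⊗[Λ] M →ₗ[Λ] C(T, M) :=
  TensorProduct.lift contMapSMulBilin

section FiberIndicator

omit [T2Space T] [TotallyDisconnectedSpace T] [TopologicalSpace M] [DiscreteTopology M]

variable {Y : Type*} [TopologicalSpace Y] [DiscreteTopology Y]

noncomputable def rangeFinset (e : C(T, Y)) : Finset Y :=
  (isCompact_range e.continuous).finite_of_discrete.toFinset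

lemma mem_rangeFinset {e : C(T, Y)} {y : Y} : y ∈ rangeFinset e ↔ ∃ t, e t = y := by
  simp [rangeFinset]

lemma apply_mem_rangeFinset (e : C(T, Y)) (t : T) : e t ∈ rangeFinset e :=
  mem_rangeFinset.2 ⟨t, rfl⟩

variable [DecidableEq Y]

def fiberIndicator (e : C(T, Y)) (y : Y) : C(T, Λ) :=
  ⟨fun t => if e t = y then 1 else 0,
    (continuous_of_discreteTopology (f := fun z : Y => if z = y then (1 : Λ) else 0)).comp
      e.continuous⟩

omit [CompactSpace T] [DiscreteTopology Λ] in
@[simp]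
lemma fiberIndicator_apply (e : C(T, Y)) (y : Y) (t : T) :
    fiberIndicator (Λ := Λ) e y t = if e t = y then 1 else 0 :=
  rfl

omit [DiscreteTopology Λ] in
lemma sum_fiberIndicator_smul {N : Type*} [AddCommMonoid N] [Module Λ N]
    (e : C(T, Y)) (φ : Y → N) (t : T) :
    ∑ y ∈ rangeFinset e, fiberIndicator (Λ := Λ) e y t • φ y = φ (e t) := by
  simp [ite_smul, Finset.sum_ite_eq, apply_mem_rangeFinset]

lemma eq_sum_smul_fiberIndicator {e : C(T, Y)} {f : C(T, Λ)} {φ : Y → Λ}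
    (hf : ⇑f = φ ∘ e) :
    f = ∑ y ∈ rangeFinset e, φ y • fiberIndicator (Λ := Λ) e y := by
  ext t
  simp only [ContinuousMap.coe_sum, Finset.sum_apply, ContinuousMap.smul_apply, smul_eq_mul,
    mul_comm (φ _)]
  rw [hf]
  exact (sum_fiberIndicator_smul (Λ := Λ) e φ t).symm

lemma sum_fiberIndicator_tmul_eq_zero (e : C(T, Y)) (n : Y → M) (hn : ∀ t, n (e t) = 0) :
    ∑ y ∈ rangeFinset e, fiberIndicator (Λ := Λ) e y ⊗ₜ[Λ] n y = 0 :=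
  Finset.sum_eq_zero fun y hy => by
    obtain ⟨t, rfl⟩ := mem_rangeFinset.1 hy
    rw [hn t, TensorProduct.tmul_zero]

open scoped Classical in
lemma sum_tmul_eq_sum_fiberIndicator_tmul {ι : Type*} [Fintype ι] (f : ι → C(T, Λ))
    (m : ι → M) :
    ∑ i, f i ⊗ₜ[Λ] m i = ∑ y ∈ rangeFinset (ContinuousMap.pi f),
      fiberIndicator (ContinuousMap.pi f) y ⊗ₜ[Λ] ∑ i, y i • m i := by
  have hf : ∀ i, f i = ∑ y ∈ rangeFinset (ContinuousMap.pi f),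
      y i • fiberIndicator (ContinuousMap.pi f) y := fun i =>
    eq_sum_smul_fiberIndicator rfl
  simp_rw [TensorProduct.tmul_sum, ← TensorProduct.smul_tmul]
  conv_lhs => enter [2, i]; rw [hf i, TensorProduct.sum_tmul]
  exact Finset.sum_comm

end FiberIndicator

section TensorMap

omit [CompactSpace T] [T2Space T] [TotallyDisconnectedSpace T]

lemma contMapTensorEquivMap_tmul_apply (f : C(T, Λ)) (m : M) (t : T) :
    contMapTensorEquivMap (f ⊗ₜ[Λ] m) t = f t • m :=
  rfl

lemma contMapTensorEquivMap_smul (c : C(T, Λ)) (z : C(T, Λ) ⊗[Λ] M) :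
    contMapTensorEquivMap (c • z) = c • contMapTensorEquivMap z := by
  induction z using TensorProduct.induction_on with
  | zero => simp
  | tmul f m =>
    ext t
    simp [TensorProduct.smul_tmul', contMapTensorEquivMap_tmul_apply, mul_smul]
  | add x y hx hy => rw [smul_add, map_add, map_add, hx, hy, smul_add]

variable [CompactSpace T]

lemma contMapTensorEquivMap_sum_fiberIndicator_tmul {Y : Type*} [TopologicalSpace Y]
    [DiscreteTopology Y] [DecidableEq Y] (e : C(T, Y)) (n : Y → M) (t : T) :
    contMapTensorEquivMap (∑ y ∈ rangeFinset e, fiberIndicator e y ⊗ₜ[Λ] n y) t = n (e t) := by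
  simp only [map_sum, ContinuousMap.coe_sum, Finset.sum_apply, contMapTensorEquivMap_tmul_apply]
  exact sum_fiberIndicator_smul e n t

lemma contMapTensorEquivMap_injective :
    Function.Injective (contMapTensorEquivMap (T := T) (Λ := Λ) (M := M)) := by
  classical
  refine (injective_iff_map_eq_zero _).2 fun z hz => ?_
  obtain ⟨s, rfl⟩ := TensorProduct.exists_finset z
  rw [← Finset.sum_coe_sort s,
    sum_tmul_eq_sum_fiberIndicator_tmul (fun p : s => p.1.1) (fun p => p.1.2)] at hz ⊢
  refine sum_fiberIndicator_tmul_eq_zero _ _ fun t => ?_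
  exact (contMapTensorEquivMap_sum_fiberIndicator_tmul _ _ t).symm.trans (DFunLike.congr_fun hz t)

lemma contMapTensorEquivMap_surjective :
    Function.Surjective (contMapTensorEquivMap (T := T) (Λ := Λ) (M := M)) := by
  classical
  exact fun g => ⟨∑ m ∈ rangeFinset g, fiberIndicator g m ⊗ₜ[Λ] m,
    ContinuousMap.ext (contMapTensorEquivMap_sum_fiberIndicator_tmul g id)⟩

end TensorMap

/-- For a profinite space `T`, a discrete ring `Λ` and a discrete
`Λ`-module `M`, the natural map `C(T, Λ) ⊗_Λ M → C(T, M)`, `f ⊗ x ↦ (t ↦ f t • x)`, is an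
isomorphism of `C(T, Λ)`-modules: it is bijective and `C(T, Λ)`-linear. -/
theorem contMap_tensor_discrete_module_iso :
    Function.Bijective (contMapTensorEquivMap (T := T) (Λ := Λ) (M := M)) ∧
      ∀ (c : C(T, Λ)) (z : C(T, Λ) ⊗[Λ] M),
        contMapTensorEquivMap (c • z) = c • contMapTensorEquivMap z :=
  ⟨⟨contMapTensorEquivMap_injective, contMapTensorEquivMap_surjective⟩,
    contMapTensorEquivMap_smul⟩

end
end

section
/- Let f : Y → X be a continuous surjective map of topological spaces that is both open and closed and has finite fibers of size at most n for some fixed n. If X is connected, then Y has only finitely many connected components, and the restriction of f to any connected component of Y is surjective onto X. -/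
set_option linter.unusedVariables false

open Set Function

/-- Let `f : Y → X` be a continuous surjective map which is both open and
closed and has finite fibers of size at most `n`. If `X` is connected, then `Y` has only
finitely many connected components, and the restriction of `f` to any connected component
of `Y` is surjective onto `X`. -/
theorem finitely_many_components_of_open_closed_finite_fibers
    {X Y : Type*} [TopologicalSpace X] [TopologicalSpace Y]
    (f : Y → X) (hf : Continuous f) (hsurj : Surjective f)
    (hopen : IsOpenMap f) (hclosed : IsClosedMap f)
    (n : ℕ) (hfib : ∀ x : X, (f ⁻¹' {x}).Finite ∧ (f ⁻¹' {x}).ncard ≤ n)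
    (hX : ConnectedSpace X) :
    Finite (ConnectedComponents Y) ∧ ∀ y : Y, f '' connectedComponent y = univ := by
  classical
  -- The quasicomponent of `y`
  set Q : Y → Set Y := fun y => {z | ∀ U : Set Y, IsClopen U → y ∈ U → z ∈ U} with hQdef
  have hQrefl : ∀ y, y ∈ Q y := fun y U hU hy => hy
  -- Key: the quasicomponent of any point meets every fiber
  have key : ∀ (y : Y) (x : X), ∃ z, f z = x ∧ z ∈ Q y := by
    intro y x
    by_contra hcon
    push_neg at hcon
    have hex : ∀ z : (f ⁻¹' {x}), ∃ U : Set Y, IsClopen U ∧ y ∈ U ∧ (z : Y) ∉ U := by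
      rintro ⟨z, hz⟩
      have h1 : z ∉ Q y := hcon z (by simpa using hz)
      simp only [hQdef, mem_setOf_eq, not_forall] at h1
      obtain ⟨U, hU, hyU, hzU⟩ := h1
      exact ⟨U, hU, hyU, hzU⟩
    choose U hU hyU hzU using hex
    have hFin : (f ⁻¹' {x}).Finite := (hfib x).1
    have : Finite (f ⁻¹' {x}) := hFin.to_subtype
    set V : Set Y := ⋂ z : (f ⁻¹' {x}), U z with hVdef
    have hV : IsClopen V := isClopen_iInter_of_finite hU
    have hyV : y ∈ V := mem_iInter.2 hyU
    have himg : IsClopen (f '' V) := ⟨hclosed V hV.isClosed, hopen V hV.isOpen⟩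
    have huniv : f '' V = univ := himg.eq_univ ⟨f y, mem_image_of_mem f hyV⟩
    have hx : x ∈ f '' V := huniv ▸ mem_univ x
    obtain ⟨w, hwV, hwx⟩ := hx
    have hwF : w ∈ f ⁻¹' {x} := by simpa using hwx
    exact hzU ⟨w, hwF⟩ (mem_iInter.1 hwV ⟨w, hwF⟩)
  -- symmetry
  have hQsymm : ∀ y z, z ∈ Q y → y ∈ Q z := by
    intro y z hz U hU hzU
    by_contra hy
    exact (hz Uᶜ hU.compl hy) hzU
  -- equivalence classes
  have hQeq : ∀ y z, z ∈ Q y → Q z = Q y := by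
    intro y z hz
    apply Subset.antisymm
    · intro w hw U hU hyU
      exact hw U hU (hz U hU hyU)
    · intro w hw U hU hzU
      exact hw U hU (hQsymm y z hz U hU hzU)
  have hQclosed : ∀ y, IsClosed (Q y) := by
    intro y
    have : Q y = ⋂ (U : Set Y) (_ : IsClopen U) (_ : y ∈ U), U := by
      ext z
      simp [hQdef, mem_iInter]
    rw [this]
    exact isClosed_iInter fun U => isClosed_iInter fun hU =>
      isClosed_iInter fun _ => hU.isClosed
  -- openness of quasicomponents
  have hQopen : ∀ y, IsOpen (Q y) := by
    intro y
    obtain ⟨x₀⟩ := hX.toNonempty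
    have hFin : (f ⁻¹' {x₀}).Finite := (hfib x₀).1
    have hcompl : (Q y)ᶜ = ⋃ z ∈ (f ⁻¹' {x₀}) ∩ (Q y)ᶜ, Q z := by
      ext w
      constructor
      · intro hw
        obtain ⟨z, hzx, hzQw⟩ := key w x₀
        have hzF : z ∈ f ⁻¹' {x₀} := by simpa using hzx
        have hQzw : Q z = Q w := hQeq w z hzQw
        have hznQy : z ∉ Q y := by
          intro hzQy
          exact hw (by rw [← hQeq y z hzQy, hQzw]; exact hQrefl w)
        exact mem_biUnion ⟨hzF, hznQy⟩ (hQzw ▸ hQrefl w)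
      · rintro hmem hwQy
        obtain ⟨z, ⟨hzF, hznQy⟩, hwQz⟩ := mem_iUnion₂.1 hmem
        exact hznQy ((hQeq y w hwQy) ▸ hQsymm z w hwQz)
    have : IsClosed ((Q y)ᶜ) := by
      rw [hcompl]
      exact (hFin.inter_of_left _).isClosed_biUnion fun z _ => hQclosed z
    simpa using this.isOpen_compl
  -- quasicomponents are preconnected
  have hQconn : ∀ y, IsPreconnected (Q y) := by
    intro y
    rw [isPreconnected_iff_subset_of_disjoint]
    intro u v hu hv hcover hdisj
    rcases Classical.em (y ∈ u) with hyu | hyu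
    · left
      have hA : IsClopen (Q y ∩ u) := by
        constructor
        · have : Q y ∩ u = Q y ∩ vᶜ := by
            ext w
            constructor
            · rintro ⟨hwQ, hwu⟩
              refine ⟨hwQ, fun hwv => ?_⟩
              have : w ∈ Q y ∩ (u ∩ v) := ⟨hwQ, hwu, hwv⟩
              rw [hdisj] at this; exact this
            · rintro ⟨hwQ, hwv⟩
              exact ⟨hwQ, (hcover hwQ).resolve_right hwv⟩
          rw [this]
          exact (hQclosed y).inter hv.isClosed_compl
        · exact (hQopen y).inter hu
      intro w hw
      exact (hw _ hA ⟨hQrefl y, hyu⟩).2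
    · right
      have hyv : y ∈ v := (hcover (hQrefl y)).resolve_left hyu
      have hA : IsClopen (Q y ∩ v) := by
        constructor
        · have : Q y ∩ v = Q y ∩ uᶜ := by
            ext w
            constructor
            · rintro ⟨hwQ, hwv⟩
              refine ⟨hwQ, fun hwu => ?_⟩
              have : w ∈ Q y ∩ (u ∩ v) := ⟨hwQ, hwu, hwv⟩
              rw [hdisj] at this; exact this
            · rintro ⟨hwQ, hwu⟩
              exact ⟨hwQ, (hcover hwQ).resolve_left hwu⟩
          rw [this]
          exact (hQclosed y).inter hu.isClosed_compl
        · exact (hQopen y).inter hv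
      intro w hw
      exact (hw _ hA ⟨hQrefl y, hyv⟩).2
  -- quasicomponent = connected component
  have hQc : ∀ y, Q y = connectedComponent y := by
    intro y
    apply Subset.antisymm
    · exact (hQconn y).subset_connectedComponent (hQrefl y)
    · intro z hz U hU hyU
      exact hU.connectedComponent_subset hyU hz
  have hmain : ∀ y : Y, f '' connectedComponent y = univ := by
    intro y
    apply eq_univ_of_forall
    intro x
    obtain ⟨z, hzx, hzQ⟩ := key y x
    exact ⟨z, (hQc y) ▸ hzQ, hzx⟩
  refine ⟨?_, hmain⟩
  obtain ⟨x₀⟩ := hX.toNonempty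
  have hFin : (f ⁻¹' {x₀}).Finite := (hfib x₀).1
  have : Finite (f ⁻¹' {x₀}) := hFin.to_subtype
  apply Finite.of_surjective (fun z : (f ⁻¹' {x₀}) => (ConnectedComponents.mk (z : Y)))
  intro c
  obtain ⟨y, rfl⟩ := ConnectedComponents.surjective_coe c
  have hx : x₀ ∈ f '' connectedComponent y := (hmain y) ▸ mem_univ x₀
  obtain ⟨z, hzc, hzx⟩ := hx
  refine ⟨⟨z, by simpa using hzx⟩, ?_⟩
  exact ConnectedComponents.coe_eq_coe.2 (connectedComponent_eq hzc).symm
end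

section
/- Let R be a valuation ring, a ∈ R a nonzero element, and M a torsion-free R-module (equivalently, a flat R-module). Then M/aM is a flat module over R/aR. -/
open TensorProduct

theorem Module.Flat.of_isTorsionFree_of_isBezout {R M : Type*} [CommRing R] [IsDomain R]
    [IsBezout R] [AddCommGroup M] [Module R M] [Module.IsTorsionFree R M] :
    Module.Flat R M :=
  Module.Flat.flat_iff_torsion_eq_bot_of_isBezout.mpr
    (Submodule.isTorsionFree_iff_torsion_eq_bot.mp ‹_›)

/-- `M ⧸ I • M` is the base change `(R ⧸ I) ⊗[R] M`, and flatness is stable under base change. -/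
theorem Module.Flat.quotient_smul_top {R M : Type*} [CommRing R] [AddCommGroup M] [Module R M]
    [Module.Flat R M] (I : Ideal R) :
    Module.Flat (R ⧸ I) (M ⧸ I • (⊤ : Submodule R M)) :=
  Module.Flat.of_linearEquiv <|
    LinearEquiv.extendScalarsOfSurjective Ideal.Quotient.mk_surjective
      (quotTensorEquivQuotSMul M I).symm

theorem quotient_flat_of_torsionFree_over_valuationRing_general
    {R : Type*} [CommRing R] [IsDomain R] [ValuationRing R]
    (a : R)
    {M : Type*} [AddCommGroup M] [Module R M]
    (htf : ∀ (r : R) (x : M), r • x = 0 → r = 0 ∨ x = 0) :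
    Module.Flat (R ⧸ Ideal.span {a})
      (M ⧸ ((Ideal.span {a} : Ideal R) • (⊤ : Submodule R M))) := by
  have : Module.IsTorsionFree R M := .of_smul_eq_zero htf
  have : Module.Flat R M := .of_isTorsionFree_of_isBezout
  exact Module.Flat.quotient_smul_top _

/-- Let `R` be a valuation ring, `a ∈ R` a nonzero element and `M` a
torsion-free `R`-module. Then `M/aM` is a flat module over `R/aR`. -/
theorem quotient_flat_of_torsionFree_over_valuationRing
    {R : Type*} [CommRing R] [IsDomain R] [ValuationRing R]
    (a : R) (ha : a ≠ 0)
    {M : Type*} [AddCommGroup M] [Module R M]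
    (htf : ∀ (r : R) (x : M), r • x = 0 → r = 0 ∨ x = 0) :
    Module.Flat (R ⧸ Ideal.span {a})
      (M ⧸ ((Ideal.span {a} : Ideal R) • (⊤ : Submodule R M))) :=
  quotient_flat_of_torsionFree_over_valuationRing_general a htf
end

section
/- Let f : Y → X be a continuous map of compact Hausdorff spaces that is both open and closed. Then the induced map π₀(f) : π₀(Y) → π₀(X) on the spaces of connected components (with the quotient topology) is an open map. -/
/-!
Since `Y` is compact Hausdorff, `π₀(Y)` is profinite, so its clopen sets form a basis and it
suffices to show that `π₀(f)` maps a clopen set `s` to an open set. The preimage `V` of `s` in `Y`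
is clopen, hence so is `f '' V` because `f` is open and closed. A clopen set is a union of
connected components, so the image of `f '' V` in `π₀(X)`, which is `π₀(f) '' s`, has preimage
`f '' V` and is therefore open.
-/

open Set

namespace ConnectedComponents

variable {α : Type*} [TopologicalSpace α]

theorem preimage_image_coe_of_isClopen {W : Set α} (hW : IsClopen W) :
    ((↑) : α → ConnectedComponents α) ⁻¹' ((↑) '' W) = W := by
  rw [connectedComponents_preimage_image, hW.biUnion_connectedComponent_eq]

theorem isClopen_image_coe_of_isClopen {W : Set α} (hW : IsClopen W) :
    IsClopen (((↑) : α → ConnectedComponents α) '' W) := by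
  refine ⟨isQuotientMap_coe.isClosed_preimage.mp ?_, isQuotientMap_coe.isOpen_preimage.mp ?_⟩ <;>
    rw [preimage_image_coe_of_isClopen hW]
  exacts [hW.1, hW.2]

end ConnectedComponents

theorem Continuous.image_connectedComponentsMap {Y X : Type*} [TopologicalSpace Y]
    [TopologicalSpace X] {f : Y → X} (hf : Continuous f) (s : Set (ConnectedComponents Y)) :
    hf.connectedComponentsMap '' s = (↑) '' (f '' ((↑) ⁻¹' s)) := by
  conv_lhs => rw [← image_preimage_eq s ConnectedComponents.surjective_coe]
  rw [image_image, image_image]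
  rfl

theorem Continuous.isOpenMap_connectedComponentsMap_of_isClopen_image {Y X : Type*}
    [TopologicalSpace Y] [CompactSpace Y] [T2Space Y] [TopologicalSpace X]
    {f : Y → X} (hf : Continuous f) (hclopen : ∀ V, IsClopen V → IsClopen (f '' V)) :
    IsOpenMap hf.connectedComponentsMap := by
  refine isTopologicalBasis_isClopen.isOpenMap_iff.mpr fun s hs ↦ ?_
  rw [hf.image_connectedComponentsMap]
  exact (ConnectedComponents.isClopen_image_coe_of_isClopen <|
    hclopen _ (hs.preimage ConnectedComponents.continuous_coe)).isOpen

theorem pi0_openMap_of_open_closed_general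
    {Y X : Type*} [TopologicalSpace Y] [CompactSpace Y] [T2Space Y]
    [TopologicalSpace X]
    (f : Y → X) (hf : Continuous f) (hopen : IsOpenMap f) (hclosed : IsClosedMap f) :
    IsOpenMap hf.connectedComponentsMap :=
  hf.isOpenMap_connectedComponentsMap_of_isClopen_image fun V hV ↦
    ⟨hclosed V hV.1, hopen V hV.2⟩

/-- Let `f : Y → X` be a continuous map of compact Hausdorff spaces which
is both open and closed. Then the induced map `π₀(f) : π₀(Y) → π₀(X)` on spaces of
connected components (with the quotient topologies) is an open map. -/
theorem pi0_openMap_of_open_closed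
    {Y X : Type*} [TopologicalSpace Y] [CompactSpace Y] [T2Space Y]
    [TopologicalSpace X] [CompactSpace X] [T2Space X]
    (f : Y → X) (hf : Continuous f) (hopen : IsOpenMap f) (hclosed : IsClosedMap f) :
    IsOpenMap hf.connectedComponentsMap :=
  pi0_openMap_of_open_closed_general f hf hopen hclosed
end

section
/- Every finitely presented torsion module M over the ring of integers O of C_p is isomorphic to a finite direct sum O/π₁O ⊕ … ⊕ O/π_nO for suitable nonzero elements π₁, …, π_n of the maximal ideal m of O. -/
/-!
Divisibility in the ring of integers is total (`b ∣ a` as soon as `‖a‖ ≤ ‖b‖`), so among the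
finitely many coordinates of finitely many generators of a submodule `N ⊆ Rⁿ` there is one,
`x i`, dividing all the others. A transvection turns `x` into `x i • eᵢ` while keeping the `i`-th
coordinate, which splits off `R ⧸ (x i)`; by induction on `n` this is a Smith normal form, and a
finitely presented module is `⨁ R ⧸ (dᵢ)`. Unit entries give zero summands, torsion excludes
`dᵢ = 0`, and nonunits of the valuation ring lie in the maximal ideal.
-/

/-- The ring of integers (closed unit ball) of a nonarchimedean normed field,
e.g. `𝒪 ⊆ ℂ_p`. -/
def ringOfIntegers (Cp : Type*) [NormedField Cp] [IsUltrametricDist Cp] : Subring Cp where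
  carrier := {x | ‖x‖ ≤ 1}
  mul_mem' := by
    intro a b ha hb
    simp only [Set.mem_setOf_eq, norm_mul] at *
    calc ‖a‖ * ‖b‖ ≤ 1 * 1 := mul_le_mul ha hb (norm_nonneg _) zero_le_one
    _ = 1 := mul_one 1
  one_mem' := by simp
  add_mem' := by
    intro a b ha hb
    exact le_trans (IsUltrametricDist.norm_add_le_max a b) (max_le ha hb)
  zero_mem' := by simp
  neg_mem' := by intro a ha; simpa using ha

/-- The maximal ideal (open unit ball) of the ring of integers. -/
def maxIdeal (Cp : Type*) [NormedField Cp] [IsUltrametricDist Cp] :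
    Ideal (ringOfIntegers Cp) where
  carrier := {x | ‖(x : Cp)‖ < 1}
  add_mem' := by
    intro a b ha hb
    exact lt_of_le_of_lt (IsUltrametricDist.norm_add_le_max (a : Cp) (b : Cp)) (max_lt ha hb)
  zero_mem' := by simp
  smul_mem' := by
    intro c x hx
    simp only [Set.mem_setOf_eq, smul_eq_mul] at *
    push_cast
    rw [norm_mul]
    exact lt_of_le_of_lt (mul_le_of_le_one_left (norm_nonneg _) c.2) hx

open Submodule

section Pi

variable (R : Type*) [Semiring R] {ι : Type*} [DecidableEq ι] (i : ι) (φ : ι → Type*)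
  [∀ j, AddCommMonoid (φ j)] [∀ j, Module R (φ j)]

@[simps]
def LinearEquiv.piSplitAt : (∀ j, φ j) ≃ₗ[R] φ i × ∀ j : {j // j ≠ i}, φ j :=
  { Equiv.piSplitAt i φ with
    map_add' := fun _ _ => rfl
    map_smul' := fun _ _ => rfl }

theorem Submodule.comap_piSplitAt_prod_pi (p : ∀ j, Submodule R (φ j)) :
    ((p i).prod (pi Set.univ fun j : {j // j ≠ i} => p j)).comap
      (LinearEquiv.piSplitAt R i φ).toLinearMap = pi Set.univ p := by
  ext y
  simp only [mem_comap, mem_prod, mem_pi, Set.mem_univ, true_implies]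
  refine ⟨fun ⟨hi, hj⟩ j => ?_, fun h => ⟨h i, fun j => h j⟩⟩
  by_cases hji : j = i
  · subst hji; exact hi
  · exact hj ⟨j, hji⟩

end Pi

section CommRing

variable {R : Type*} [CommRing R]

theorem Submodule.eq_prod_map_snd {P : Type*} [AddCommGroup P] [Module R P]
    {L : Submodule R (R × P)} {d : R} (hd : (d, 0) ∈ L) (hfst : ∀ z ∈ L, z.1 ∈ Ideal.span {d}) :
    L = Submodule.prod (Ideal.span {d}) (L.map (LinearMap.snd R R P)) := by
  refine le_antisymm (fun z hz => ⟨hfst z hz, z, hz, rfl⟩) ?_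
  rintro ⟨a, _⟩ ⟨ha, y, hy, rfl⟩
  obtain ⟨c, rfl⟩ := Ideal.mem_span_singleton'.mp ha
  obtain ⟨c', hc'⟩ := Ideal.mem_span_singleton'.mp (hfst y hy)
  have : (c * d, y.2) = y + (c - c') • (d, 0) := by
    ext <;> simp [← hc']; ring
  simpa [this] using add_mem hy (L.smul_mem (c - c') hd)

theorem exists_linearEquiv_apply_eq_single {ι : Type*} [DecidableEq ι] {x : ι → R} {i : ι}
    (hx : ∀ j, x i ∣ x j) :
    ∃ e : (ι → R) ≃ₗ[R] (ι → R), e x = Pi.single i (x i) ∧ ∀ y, e y i = y i := by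
  choose r hr using hx
  -- `x = x i • update r i 1`, so `y ↦ y + y i • v` sends `x` to `x i • eᵢ`
  let v : ι → R := Pi.single i 1 - Function.update r i 1
  have hv : (LinearMap.proj i : (ι → R) →ₗ[R] R) v = 0 := by simp [v]
  refine ⟨LinearEquiv.transvection hv, ?_, fun y => by simp [LinearMap.transvection.apply, v]⟩
  ext j
  rw [LinearEquiv.transvection.apply]
  by_cases hji : j = i
  · subst hji; simp [v]
  · simp [v, hji, hr j]

theorem Submodule.exists_linearEquiv_map_eq_prod {ι : Type*} [DecidableEq ι]
    {N : Submodule R (ι → R)} {x : ι → R} (hx : x ∈ N) {i : ι}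
    (hN : N ≤ pi Set.univ fun _ => Ideal.span {x i}) :
    ∃ e : (ι → R) ≃ₗ[R] R × ({j // j ≠ i} → R),
      N.map e.toLinearMap =
        Submodule.prod (Ideal.span {x i}) ((N.map e.toLinearMap).map (LinearMap.snd R R _)) := by
  obtain ⟨e₀, hx₀, he₀⟩ := exists_linearEquiv_apply_eq_single fun j =>
    Ideal.mem_span_singleton.mp (mem_pi.mp (hN hx) j (Set.mem_univ j))
  refine ⟨e₀ ≪≫ₗ LinearEquiv.piSplitAt R i _, eq_prod_map_snd ⟨x, hx, ?_⟩ ?_⟩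
  · ext j
    · simp [hx₀]
    · simp [hx₀, j.2]
  · rintro _ ⟨y, hy, rfl⟩
    simpa [he₀] using mem_pi.mp (hN hy) i (Set.mem_univ i)

end CommRing

section PreValuationRing

variable {R : Type*} [CommRing R] [PreValuationRing R]

theorem PreValuationRing.exists_dvd_forall {ι : Type*} [Finite ι] [Nonempty ι] (f : ι → R) :
    ∃ i, ∀ j, f i ∣ f j := by
  have htotal := PreValuationRing.iff_ideal_total.mp ‹_›
  obtain ⟨_, ⟨i, rfl⟩, hmax⟩ :=
    (Set.finite_range fun i => Ideal.span {f i}).exists_maximal (Set.range_nonempty _)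
  exact ⟨i, fun j => Ideal.span_singleton_le_span_singleton.mp
    ((htotal.total _ _).elim id (hmax ⟨j, rfl⟩))⟩

theorem Submodule.FG.exists_le_pi_span_singleton {ι : Type*} [Finite ι] [Nonempty ι]
    {N : Submodule R (ι → R)} (hN : N.FG) :
    ∃ x ∈ N, ∃ i, N ≤ pi Set.univ fun _ => Ideal.span {x i} := by
  obtain ⟨S, hS, rfl⟩ := fg_def.mp hN
  have : Finite (insert 0 S : Set (ι → R)) := (hS.insert 0).to_subtype
  obtain ⟨⟨⟨x, hx⟩, i⟩, hdvd⟩ :=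
    PreValuationRing.exists_dvd_forall fun yj : (insert 0 S : Set (ι → R)) × ι => yj.1.1 yj.2
  rw [← span_insert_zero]
  refine ⟨x, subset_span hx, i, span_le.mpr ?_⟩
  exact fun y hy j _ => Ideal.mem_span_singleton.mpr (hdvd (⟨y, hy⟩, j))

theorem Submodule.FG.exists_linearEquiv_map_eq_pi {ι : Type*} [Finite ι]
    {N : Submodule R (ι → R)} (hN : N.FG) :
    ∃ (e : (ι → R) ≃ₗ[R] (ι → R)) (d : ι → R),
      N.map e.toLinearMap = pi Set.univ fun i => Ideal.span {d i} := by
  classical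
  induction h : Nat.card ι generalizing ι with
  | zero =>
    have : IsEmpty ι := (Nat.card_eq_zero.mp h).resolve_right (not_infinite_iff_finite.mpr ‹_›)
    exact ⟨LinearEquiv.refl R _, 0, Subsingleton.elim _ _⟩
  | succ n ih =>
    have : Nonempty ι := (Nat.card_pos_iff.mp (by omega)).1
    obtain ⟨x, hx, i, hle⟩ := hN.exists_le_pi_span_singleton
    obtain ⟨e₁, he₁⟩ := exists_linearEquiv_map_eq_prod hx hle
    have hcard : Nat.card {j // j ≠ i} = n := by
      have := Nat.card_congr (Equiv.optionSubtypeNe i)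
      rw [Finite.card_option] at this
      omega
    obtain ⟨e₂, d, he₂⟩ := ih ((hN.map e₁.toLinearMap).map (LinearMap.snd R R _)) hcard
    refine ⟨e₁ ≪≫ₗ (LinearEquiv.refl R R).prodCongr e₂ ≪≫ₗ
      (LinearEquiv.piSplitAt R i fun _ => R).symm, (Equiv.piSplitAt i fun _ => R).symm (x i, d), ?_⟩
    rw [LinearEquiv.coe_trans, LinearEquiv.coe_trans, map_comp, map_comp, he₁,
      LinearEquiv.coe_prodCongr, LinearMap.prodMap_map_prod, he₂, LinearEquiv.refl_toLinearMap,
      map_id, ← comap_equiv_eq_map_symm]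
    convert comap_piSplitAt_prod_pi R i (fun _ => R)
      fun j => Ideal.span {(Equiv.piSplitAt i fun _ => R).symm (x i, d) j} using 3
    · rfl
    · simp
    · rfl
    · congr 1
      funext j
      simp [j.2]

end PreValuationRing

section QuotientPi

variable {R : Type*} [CommRing R]

theorem exists_linearEquiv_pi_quotient_not_isUnit {ι : Type*} [Finite ι] (d : ι → R) :
    ∃ (n : ℕ) (π : Fin n → R), (∀ k, ¬IsUnit (π k)) ∧
      Nonempty ((∀ i, R ⧸ Ideal.span {d i}) ≃ₗ[R] ∀ k, R ⧸ Ideal.span {π k}) := by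
  classical
  let Q : ι → Type _ := fun i => R ⧸ Ideal.span {d i}
  let p : ι → Prop := fun i => ¬IsUnit (d i)
  let σ := Finite.equivFin {i // p i}
  have : ∀ i : {i // ¬p i}, Unique (Q (Equiv.sumCompl p (.inr i))) := fun i =>
    @uniqueOfSubsingleton _ (Ideal.Quotient.subsingleton_iff.mpr
      (Ideal.span_singleton_eq_top.mpr (not_not.mp i.2))) 0
  refine ⟨_, fun k => d (σ.symm k), fun k => (σ.symm k).2, ⟨?_⟩⟩
  exact (LinearEquiv.piCongrLeft R Q (Equiv.sumCompl p)).symm ≪≫ₗ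
    LinearEquiv.sumPiEquivProdPi R _ _ _ ≪≫ₗ LinearEquiv.prodUnique ≪≫ₗ
    (LinearEquiv.piCongrLeft R (fun i : {i // p i} => Q i) σ.symm).symm

theorem ne_zero_of_forall_exists_smul_eq_zero {ι : Type*} [DecidableEq ι] {d : ι → R}
    (htors : ∀ x : ∀ i, R ⧸ Ideal.span {d i}, ∃ a : R, a ≠ 0 ∧ a • x = 0) (i : ι) : d i ≠ 0 := by
  intro hd
  obtain ⟨a, ha, hax⟩ := htors (Pi.single i 1)
  have : a ∈ Ideal.span {d i} := by
    simpa [Algebra.smul_def, Ideal.Quotient.eq_zero_iff_mem] using congr_fun hax i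
  exact ha (by simpa [hd] using this)

end QuotientPi

section FinitePresentation

variable {R : Type*} [CommRing R] [PreValuationRing R] {M : Type*} [AddCommGroup M] [Module R M]

theorem Module.FinitePresentation.exists_linearEquiv_pi_quotient
    (hM : Module.FinitePresentation R M) :
    ∃ (n : ℕ) (d : Fin n → R), Nonempty (M ≃ₗ[R] ∀ i, R ⧸ Ideal.span {d i}) := by
  obtain ⟨n, N, eM, hN⟩ := Module.FinitePresentation.exists_fin R M
  obtain ⟨e, d, he⟩ := hN.exists_linearEquiv_map_eq_pi
  exact ⟨n, d, ⟨eM ≪≫ₗ Quotient.equiv N _ e he ≪≫ₗ quotientPi _⟩⟩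

theorem Module.FinitePresentation.exists_linearEquiv_pi_quotient_of_torsion
    (hM : Module.FinitePresentation R M) (htors : ∀ x : M, ∃ a : R, a ≠ 0 ∧ a • x = 0) :
    ∃ (n : ℕ) (π : Fin n → R), (∀ i, ¬IsUnit (π i) ∧ π i ≠ 0) ∧
      Nonempty (M ≃ₗ[R] ∀ i, R ⧸ Ideal.span {π i}) := by
  obtain ⟨m, d, ⟨e₁⟩⟩ := hM.exists_linearEquiv_pi_quotient
  obtain ⟨n, π, hπ, ⟨e₂⟩⟩ := exists_linearEquiv_pi_quotient_not_isUnit d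
  let e := e₁ ≪≫ₗ e₂
  have htors' : ∀ x : ∀ i, R ⧸ Ideal.span {π i}, ∃ a : R, a ≠ 0 ∧ a • x = 0 := fun x => by
    obtain ⟨a, ha, hax⟩ := htors (e.symm x)
    exact ⟨a, ha, e.symm.injective (by rw [map_smul, hax, map_zero])⟩
  exact ⟨n, π, fun i => ⟨hπ i, ne_zero_of_forall_exists_smul_eq_zero htors' i⟩, ⟨e⟩⟩

end FinitePresentation

namespace ringOfIntegers

variable {K : Type*} [NormedField K] [IsUltrametricDist K]

theorem dvd_of_norm_le {a b : ringOfIntegers K} (h : ‖(a : K)‖ ≤ ‖(b : K)‖) : b ∣ a := by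
  rcases eq_or_ne (b : K) 0 with hb | hb
  · rw [hb, norm_zero, norm_le_zero_iff, ZeroMemClass.coe_eq_zero] at h
    exact h ▸ dvd_zero b
  · refine ⟨⟨a / b, ?_⟩, Subtype.ext (mul_div_cancel₀ _ hb).symm⟩
    show ‖(a : K) / b‖ ≤ 1
    rw [norm_div]
    exact div_le_one_of_le₀ h (norm_nonneg _)

instance : PreValuationRing (ringOfIntegers K) :=
  PreValuationRing.iff_dvd_total.mpr ⟨fun a b =>
    (le_total ‖(b : K)‖ ‖(a : K)‖).imp dvd_of_norm_le dvd_of_norm_le⟩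

theorem mem_maxIdeal_of_not_isUnit {a : ringOfIntegers K} (ha : ¬IsUnit a) : a ∈ maxIdeal K := by
  show ‖(a : K)‖ < 1
  refine lt_of_le_of_ne (show ‖(a : K)‖ ≤ 1 from a.2) fun h =>
    ha (isUnit_of_dvd_one (dvd_of_norm_le ?_))
  rw [h, OneMemClass.coe_one, norm_one]

end ringOfIntegers

variable (p : ℕ) [Fact p.Prime]
variable (Cp : Type*) [NormedField Cp] [IsUltrametricDist Cp] [CompleteSpace Cp]
  [IsAlgClosed Cp] [NormedAlgebra ℚ_[p] Cp]

theorem finitePresentation_torsion_module_structure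
    {M : Type*} [AddCommGroup M] [Module (ringOfIntegers Cp) M]
    (hfp : Module.FinitePresentation (ringOfIntegers Cp) M)
    (htors : ∀ x : M, ∃ a : ringOfIntegers Cp, a ≠ 0 ∧ a • x = 0) :
    ∃ (n : ℕ) (π : Fin n → ringOfIntegers Cp),
      (∀ i, π i ∈ maxIdeal Cp ∧ π i ≠ 0) ∧
      Nonempty (M ≃ₗ[ringOfIntegers Cp]
        ((i : Fin n) → ringOfIntegers Cp ⧸ Ideal.span {π i})) := by
  obtain ⟨n, π, hπ, e⟩ := hfp.exists_linearEquiv_pi_quotient_of_torsion htors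
  exact ⟨n, π, fun i => ⟨ringOfIntegers.mem_maxIdeal_of_not_isUnit (hπ i).1, (hπ i).2⟩, e⟩
end
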